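/- Fix x ∈ Ω, i ∈ {1,…,n}, and α ∈ [0,1) with 𝒢(Ω(x,R_i), α) nonempty, where R_i is the i-th quantile preorder. Let C = {x_(i)}, where x_(i) is the i-th smallest entry of x. Then B_{R_i}^*(x) = inf{E[F] : F ∈ 𝒻_{C^+}(Ω(x,R_i), α)}. -/

import Mathlib

noncomputable section

/-- Distributions on the finite support `S`, viewed as points of the probability
simplex inside `EuclideanSpace ℝ S` (Euclidean metric). -/
def distSet (S : Finset ℝ) : Set (EuclideanSpace ℝ ↥S) :=
  {F | (∀ s, 0 ≤ F s) ∧ ∑ s, F s = 1}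

/-- Mean of a distribution on `S`. -/
def distMean (S : Finset ℝ) (F : EuclideanSpace ℝ ↥S) : ℝ :=
  ∑ s : ↥S, F s * (s : ℝ)

open Classical in
/-- `P_F[A]`: probability of a set `A` of `n`-tuples under `n` i.i.d. draws from `F`. -/
def probOf (S : Finset ℝ) (n : ℕ) (F : EuclideanSpace ℝ ↥S)
    (A : Set (Fin n → ↥S)) : ℝ :=
  ∑ y : Fin n → ↥S, if y ∈ A then ∏ i, F (y i) else 0

/-- The interior likely set `𝒢(A, α)`. -/
def intLikely (S : Finset ℝ) (n : ℕ) (A : Set (Fin n → ↥S)) (α : ℝ) :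
    Set (EuclideanSpace ℝ ↥S) :=
  {F | F ∈ distSet S ∧ α < probOf S n F A}

/-- The likely set `𝒻(A, α)`: the closure of `𝒢(A, α)`. -/
def likely (S : Finset ℝ) (n : ℕ) (A : Set (Fin n → ↥S)) (α : ℝ) :
    Set (EuclideanSpace ℝ ↥S) :=
  closure (intLikely S n A α)

/-- `Ω`: the set of nondecreasing (`sorted`) `n`-tuples over `S`. -/
def sortedTuples (S : Finset ℝ) (n : ℕ) : Set (Fin n → ↥S) :=
  {x | Monotone x}

/-- The sorted version of a tuple. -/
def sortTup (S : Finset ℝ) (n : ℕ) (y : Fin n → ↥S) : Fin n → ↥S :=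
  y ∘ Tuple.sort y

/-- Probability of a set `A ⊆ Ω` of sorted tuples, identifying tuples with
their sorted versions. -/
def probSorted (S : Finset ℝ) (n : ℕ) (F : EuclideanSpace ℝ ↥S)
    (A : Set (Fin n → ↥S)) : ℝ :=
  probOf S n F {y | sortTup S n y ∈ A}

/-- Interior likely set for a set of sorted tuples. -/
def intLikelySorted (S : Finset ℝ) (n : ℕ) (A : Set (Fin n → ↥S)) (α : ℝ) :
    Set (EuclideanSpace ℝ ↥S) :=
  {F | F ∈ distSet S ∧ α < probSorted S n F A}

/-- Likely set for a set of sorted tuples. -/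
def likelySorted (S : Finset ℝ) (n : ℕ) (A : Set (Fin n → ↥S)) (α : ℝ) :
    Set (EuclideanSpace ℝ ↥S) :=
  closure (intLikelySorted S n A α)

/-- Upper set `Ω(x, R)` of `x` under a relation `R` on `Ω`. -/
def upperSet (S : Finset ℝ) (n : ℕ) (r : (Fin n → ↥S) → (Fin n → ↥S) → Prop)
    (x : Fin n → ↥S) : Set (Fin n → ↥S) :=
  {y ∈ sortedTuples S n | r x y}

/-- Pessimal bound `B_R^*(x) = inf {E[F] : F ∈ 𝒻(Ω(x,R), α)}`. -/
def pessimal (S : Finset ℝ) (n : ℕ) (r : (Fin n → ↥S) → (Fin n → ↥S) → Prop)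
    (α : ℝ) (x : Fin n → ↥S) : ℝ :=
  sInf (distMean S '' likelySorted S n (upperSet S n r x) α)

/-- `G` and `H` agree pointwise on `C`. -/
def ptAgree {S : Finset ℝ} (C : Set ↥S) (G H : EuclideanSpace ℝ ↥S) : Prop :=
  ∀ c ∈ C, G c = H c

open Classical in
/-- `G` and `H` agree cumulatively on `C`. -/
def cumAgree (S : Finset ℝ) (C : Set ↥S) (G H : EuclideanSpace ℝ ↥S) : Prop :=
  ∀ c ∈ C, (∑ s : ↥S, if s ≤ c then G s else 0) = ∑ s : ↥S, if s ≤ c then H s else 0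

/-- The refinement `𝒻_C`: distributions supported inside `C`. -/
def refinement (S : Finset ℝ) (C : Set ↥S) : Set (EuclideanSpace ℝ ↥S) :=
  {F ∈ distSet S | ∀ s, s ∉ C → F s = 0}

/-- `𝒢_C(A, α) = 𝒻_C ∩ 𝒢(A, α)` (for a set `A` of sorted tuples). -/
def intLikelySortedC (S : Finset ℝ) (n : ℕ) (C : Set ↥S)
    (A : Set (Fin n → ↥S)) (α : ℝ) : Set (EuclideanSpace ℝ ↥S) :=
  refinement S C ∩ intLikelySorted S n A α

/-- `𝒻_C(A, α)`: the closure of `𝒢_C(A, α)`. -/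
def likelySortedC (S : Finset ℝ) (n : ℕ) (C : Set ↥S)
    (A : Set (Fin n → ↥S)) (α : ℝ) : Set (EuclideanSpace ℝ ↥S) :=
  closure (intLikelySortedC S n C A α)

/-- The minimum of `S`, as an element of `↥S`. -/
def sMinElt (S : Finset ℝ) (hS : S.Nonempty) : ↥S :=
  ⟨S.min' hS, S.min'_mem hS⟩

/-- The augmentation `C⁺ = C ∪ {S_min} ∪ {succ c : c ∈ C, c ≠ S_max}`, where
`succ c` is the smallest element of `S` greater than `c`. -/
def aug (S : Finset ℝ) (hS : S.Nonempty) (C : Set ↥S) : Set ↥S :=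
  C ∪ {sMinElt S hS} ∪ {t | ∃ c ∈ C, c < t ∧ ∀ u : ↥S, c < u → t ≤ u}

/-- The `i`-th quantile preorder `R_i` on sorted tuples: `x ≲ y` iff
`x_(i) ≤ y_(i)` (for sorted tuples the `i`-th order statistic is entry `i`). -/
def quantileRel {S : Finset ℝ} {n : ℕ} (i : Fin n) (x y : Fin n → ↥S) : Prop :=
  x i ≤ y i

/-!
Push a distribution `F` forward along the monotone map `τ` that sends every point below
`x_(i)` to `S_min` and every other point to `x_(i)`; the result is supported in `C⁺`.
Because `τ` is monotone, sorting commutes with it, and because `τ s ≥ x_(i)` whenever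
`s ≥ x_(i)`, every sample in `Ω(x, R_i)` is mapped into `Ω(x, R_i)`: the pushforward is at
least as likely as `F`. Because `τ ≤ id`, its mean is at most that of `F`. So the two
infima over the interior likely sets agree, and passing to closures does not change the
infimum of the continuous mean.
-/

section Infimum

variable {X : Type*} [TopologicalSpace X] {f : X → ℝ}

lemma csInf_image_closure_eq (hf : Continuous f) {U : Set X} (hU : U.Nonempty)
    (hbdd : BddBelow (f '' closure U)) :
    sInf (f '' closure U) = sInf (f '' U) := by
  have hsub : f '' U ⊆ f '' closure U := Set.image_mono subset_closure
  refine le_antisymm (csInf_le_csInf hbdd (hU.image f) hsub) ?_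
  refine le_csInf ((hU.mono subset_closure).image f) fun b hb => ?_
  have hlb : sInf (f '' U) ∈ lowerBounds (closure (f '' U)) := by
    rw [lowerBounds_closure]
    exact fun a ha => csInf_le (hbdd.mono hsub) ha
  exact hlb (image_closure_subset_closure_image hf hb)

lemma csInf_image_closure_eq_of_forall_exists_le (hf : Continuous f) {U V : Set X}
    (hVU : V ⊆ U) (hU : U.Nonempty) (hbdd : BddBelow (f '' closure U))
    (hle : ∀ x ∈ U, ∃ y ∈ V, f y ≤ f x) :
    sInf (f '' closure U) = sInf (f '' closure V) := by
  obtain ⟨y, hyV, -⟩ := hle hU.some hU.some_mem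
  have hV : V.Nonempty := ⟨y, hyV⟩
  have hbddV : BddBelow (f '' closure V) := hbdd.mono (Set.image_mono (closure_mono hVU))
  have hbddU : BddBelow (f '' U) := hbdd.mono (Set.image_mono subset_closure)
  rw [csInf_image_closure_eq hf hU hbdd, csInf_image_closure_eq hf hV hbddV]
  refine le_antisymm (csInf_le_csInf hbddU (hV.image f) (Set.image_mono hVU)) ?_
  refine le_csInf (hU.image f) ?_
  rintro _ ⟨x, hx, rfl⟩
  obtain ⟨y, hy, hyx⟩ := hle x hx
  exact (csInf_le (hbddV.mono (Set.image_mono subset_closure)) ⟨y, hy, rfl⟩).trans hyx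

end Infimum

section Distributions

variable {S : Finset ℝ}

lemma isClosed_distSet (S : Finset ℝ) : IsClosed (distSet S) := by
  have hproj : ∀ s : ↥S, Continuous fun F : EuclideanSpace ℝ ↥S => F s :=
    fun s => (EuclideanSpace.proj s : EuclideanSpace ℝ ↥S →L[ℝ] ℝ).continuous
  refine IsClosed.inter ?_ (isClosed_eq (continuous_finsetSum _ fun s _ => hproj s)
    continuous_const)
  show IsClosed {F : EuclideanSpace ℝ ↥S | ∀ s, 0 ≤ F s}
  rw [Set.ofPred_forall]
  exact isClosed_iInter fun s => isClosed_le continuous_const (hproj s)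

lemma continuous_distMean (S : Finset ℝ) : Continuous (distMean S) :=
  continuous_finsetSum _ fun s _ =>
    (EuclideanSpace.proj s : EuclideanSpace ℝ ↥S →L[ℝ] ℝ).continuous.mul continuous_const

lemma min'_le_distMean (hS : S.Nonempty) {F : EuclideanSpace ℝ ↥S} (hF : F ∈ distSet S) :
    S.min' hS ≤ distMean S F :=
  calc S.min' hS = ∑ s : ↥S, F s * S.min' hS := by rw [← Finset.sum_mul, hF.2, one_mul]
    _ ≤ distMean S F :=
      Finset.sum_le_sum fun s _ => mul_le_mul_of_nonneg_left (S.min'_le _ s.2) (hF.1 s)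

lemma bddBelow_distMean_image (hS : S.Nonempty) {U : Set (EuclideanSpace ℝ ↥S)}
    (hU : U ⊆ distSet S) : BddBelow (distMean S '' U) :=
  ⟨S.min' hS, by rintro _ ⟨F, hF, rfl⟩; exact min'_le_distMean hS (hU hF)⟩

lemma closure_intLikelySorted_subset_distSet (n : ℕ) (A : Set (Fin n → ↥S)) (α : ℝ) :
    closure (intLikelySorted S n A α) ⊆ distSet S :=
  closure_minimal (fun _ hF => hF.1) (isClosed_distSet S)

end Distributions

section Pushforward

variable {S : Finset ℝ} (τ : ↥S → ↥S)

def pushDist (F : EuclideanSpace ℝ ↥S) : EuclideanSpace ℝ ↥S :=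
  WithLp.toLp 2 fun s => ∑ t : ↥S, if τ t = s then F t else 0

variable {τ}

lemma sum_pushDist_mul (F : EuclideanSpace ℝ ↥S) (g : ↥S → ℝ) :
    ∑ s, pushDist τ F s * g s = ∑ t, F t * g (τ t) := by
  simp only [pushDist, PiLp.toLp_apply, Finset.sum_mul, ite_mul, zero_mul]
  rw [Finset.sum_comm]
  simp

lemma pushDist_mem_distSet {F : EuclideanSpace ℝ ↥S} (hF : F ∈ distSet S) :
    pushDist τ F ∈ distSet S := by
  refine ⟨fun s => Finset.sum_nonneg fun t _ => ?_, ?_⟩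
  · split_ifs
    exacts [hF.1 t, le_rfl]
  · simpa using (sum_pushDist_mul (τ := τ) F fun _ => 1).trans (by simpa using hF.2)

lemma pushDist_mem_refinement {C : Set ↥S} (hτC : ∀ t, τ t ∈ C) {F : EuclideanSpace ℝ ↥S}
    (hF : F ∈ distSet S) : pushDist τ F ∈ refinement S C :=
  ⟨pushDist_mem_distSet hF, fun s hs => Finset.sum_eq_zero fun t _ =>
    if_neg fun h : τ t = s => hs (h ▸ hτC t)⟩

lemma distMean_pushDist_le (hτ : ∀ t, τ t ≤ t) {F : EuclideanSpace ℝ ↥S}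
    (hF : F ∈ distSet S) : distMean S (pushDist τ F) ≤ distMean S F := by
  rw [distMean, sum_pushDist_mul]
  exact Finset.sum_le_sum fun t _ => mul_le_mul_of_nonneg_left (hτ t) (hF.1 t)

open Classical in
lemma probOf_pushDist (n : ℕ) (F : EuclideanSpace ℝ ↥S) (B : Set (Fin n → ↥S)) :
    probOf S n (pushDist τ F) B = ∑ z : Fin n → ↥S, if τ ∘ z ∈ B then ∏ j, F (z j) else 0 := by
  have hprod : ∀ y : Fin n → ↥S, ∏ j, pushDist τ F (y j)
      = ∑ z : Fin n → ↥S, if τ ∘ z = y then ∏ j, F (z j) else 0 := by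
    intro y
    simp only [pushDist, PiLp.toLp_apply, Fintype.prod_sum, Finset.prod_ite_zero,
      Finset.mem_univ, forall_const, funext_iff, Function.comp_apply]
  have hsplit : ∀ y : Fin n → ↥S, (if y ∈ B then ∏ j, pushDist τ F (y j) else 0)
      = ∑ z : Fin n → ↥S, if τ ∘ z = y then (if y ∈ B then ∏ j, F (z j) else 0) else 0 := by
    intro y
    rw [hprod]
    split_ifs <;> simp
  simp only [probOf, hsplit]
  rw [Finset.sum_comm]
  simp

end Pushforward

section SortedEvents

variable {S : Finset ℝ} {n : ℕ} {τ : ↥S → ↥S}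

lemma sortTup_comp (hτ : Monotone τ) (y : Fin n → ↥S) :
    sortTup S n (τ ∘ y) = τ ∘ sortTup S n y :=
  (Tuple.comp_sort_eq_comp_iff_monotone.mpr (hτ.comp (Tuple.monotone_sort y))).symm

lemma probSorted_le_probSorted_pushDist (hτ : Monotone τ) {A : Set (Fin n → ↥S)}
    (hA : ∀ y ∈ A, τ ∘ y ∈ A) {F : EuclideanSpace ℝ ↥S} (hF : ∀ s, 0 ≤ F s) :
    probSorted S n F A ≤ probSorted S n (pushDist τ F) A := by
  classical
  rw [probSorted, probSorted, probOf_pushDist, probOf]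
  refine Finset.sum_le_sum fun z _ => ?_
  by_cases hz : z ∈ {y | sortTup S n y ∈ A}
  · have hτz : τ ∘ z ∈ {y | sortTup S n y ∈ A} := by
      rw [Set.mem_ofPred_eq, sortTup_comp hτ]
      exact hA _ hz
    rw [if_pos hz, if_pos hτz]
  · rw [if_neg hz]
    split_ifs
    exacts [Finset.prod_nonneg fun j _ => hF _, le_rfl]

lemma exists_mem_intLikelySortedC_distMean_le (hτ : Monotone τ) (hτle : ∀ t, τ t ≤ t)
    {C : Set ↥S} (hτC : ∀ t, τ t ∈ C) {A : Set (Fin n → ↥S)} (hA : ∀ y ∈ A, τ ∘ y ∈ A)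
    {α : ℝ} {F : EuclideanSpace ℝ ↥S} (hF : F ∈ intLikelySorted S n A α) :
    ∃ G ∈ intLikelySortedC S n C A α, distMean S G ≤ distMean S F :=
  ⟨pushDist τ F, ⟨pushDist_mem_refinement hτC hF.1, pushDist_mem_distSet hF.1,
    hF.2.trans_le (probSorted_le_probSorted_pushDist hτ hA hF.1.1)⟩,
    distMean_pushDist_le hτle hF.1⟩

theorem pessimal_eq_sInf_likelySortedC (hS : S.Nonempty) (hτ : Monotone τ)
    (hτle : ∀ t, τ t ≤ t) {C : Set ↥S} (hτC : ∀ t, τ t ∈ C)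
    {r : (Fin n → ↥S) → (Fin n → ↥S) → Prop} {x : Fin n → ↥S}
    (hA : ∀ y ∈ upperSet S n r x, τ ∘ y ∈ upperSet S n r x) {α : ℝ}
    (hne : (intLikelySorted S n (upperSet S n r x) α).Nonempty) :
    pessimal S n r α x = sInf (distMean S '' likelySortedC S n C (upperSet S n r x) α) :=
  csInf_image_closure_eq_of_forall_exists_le (continuous_distMean S) Set.inter_subset_right hne
    (bddBelow_distMean_image hS (closure_intLikelySorted_subset_distSet n _ α))
    fun _ hF => exists_mem_intLikelySortedC_distMean_le hτ hτle hτC hA hF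

end SortedEvents

section Quantile

variable {S : Finset ℝ} (hS : S.Nonempty)

lemma sMinElt_le (s : ↥S) : sMinElt S hS ≤ s :=
  S.min'_le _ s.2

def quantileCollapse (c s : ↥S) : ↥S :=
  if s < c then sMinElt S hS else c

lemma monotone_quantileCollapse (c : ↥S) : Monotone (quantileCollapse hS c) := by
  intro s t hst
  unfold quantileCollapse
  split_ifs with hs ht ht
  · exact le_rfl
  · exact sMinElt_le hS c
  · exact absurd (hst.trans_lt ht) hs
  · exact le_rfl

lemma quantileCollapse_le (c s : ↥S) : quantileCollapse hS c s ≤ s := by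
  unfold quantileCollapse
  split_ifs with hs
  exacts [sMinElt_le hS s, not_lt.mp hs]

lemma quantileCollapse_mem_aug (c s : ↥S) : quantileCollapse hS c s ∈ aug S hS {c} := by
  unfold quantileCollapse
  split_ifs
  exacts [Or.inl (Or.inr rfl), Or.inl (Or.inl rfl)]

lemma quantileCollapse_comp_mem_upperSet {n : ℕ} {i : Fin n} {x y : Fin n → ↥S}
    (hy : y ∈ upperSet S n (quantileRel i) x) :
    quantileCollapse hS (x i) ∘ y ∈ upperSet S n (quantileRel i) x := by
  refine ⟨(monotone_quantileCollapse hS _).comp hy.1, ?_⟩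
  show x i ≤ quantileCollapse hS (x i) (y i)
  rw [quantileCollapse, if_neg (not_lt.mpr hy.2)]

end Quantile

theorem stmt17_general (S : Finset ℝ) (hS : S.Nonempty) (n : ℕ) (α : ℝ) (i : Fin n) (x : Fin n → ↥S)
    (hne : (intLikelySorted S n (upperSet S n (quantileRel i) x) α).Nonempty) :
    pessimal S n (quantileRel i) α x =
      sInf (distMean S ''
        likelySortedC S n (aug S hS {x i}) (upperSet S n (quantileRel i) x) α) :=
  pessimal_eq_sInf_likelySortedC hS (monotone_quantileCollapse hS (x i))
    (quantileCollapse_le hS (x i)) (quantileCollapse_mem_aug hS (x i))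
    (fun _ hy => quantileCollapse_comp_mem_upperSet hS hy) hne

/-- for the `i`-th quantile preorder `R_i` and `C = {x_(i)}`,
`B_{R_i}^*(x) = inf {E[F] : F ∈ 𝒻_{C⁺}(Ω(x, R_i), α)}`. -/
theorem stmt17 (S : Finset ℝ) (hS : S.Nonempty) (n : ℕ) (hn : 1 ≤ n)
    (α : ℝ) (hα0 : 0 ≤ α) (hα1 : α < 1)
    (i : Fin n) (x : Fin n → ↥S) (hx : x ∈ sortedTuples S n)
    (hne : (intLikelySorted S n (upperSet S n (quantileRel i) x) α).Nonempty) :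
    pessimal S n (quantileRel i) α x =
      sInf (distMean S ''
        likelySortedC S n (aug S hS {x i}) (upperSet S n (quantileRel i) x) α) :=
  stmt17_general S hS n α i x hne

end
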